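/- arXiv:1607.02464 — 3 statements merged into one kernel-verified Lean document; each statement's English description precedes it below -/
import Mathlib

section
/- Let G be a finite solvable group, φ : G → H a surjective homomorphism, π a set of primes, and P a Hall π-subgroup of H. Then there exists a Hall π-subgroup Q of G such that φ(Q) = P. -/
/-!
Pull `P` back to `K = φ⁻¹(P)`, whose index in `G` equals the `π'`-number `|H : P|`. A Hall
`π`-subgroup `Q` of the solvable group `K` is then Hall in `G`, so `φ(Q)` is Hall in `H`; being a
Hall subgroup inside the `π`-group `P`, it equals `P`.

Hall subgroups of a finite solvable group exist by induction on its order: take a nontrivial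
normal `p`-subgroup `N` and a Hall subgroup `Q` of `G ⧸ N`. If `p ∈ π`, the preimage of `Q` is
Hall. Otherwise the preimage has `π'`-index and is either proper, and we use induction, or all of
`G`; then `N` is a normal Hall `π'`-subgroup and a Schur–Zassenhaus complement of it is Hall.
-/

/-- A Hall `π`-subgroup: its order is a `π`-number and its index is a `π'`-number. -/
def IsHallSubgroup {G : Type*} [Group G] (π : Set ℕ) (H : Subgroup G) : Prop :=
  (∀ p : ℕ, p.Prime → p ∣ Nat.card H → p ∈ π) ∧
  (∀ p : ℕ, p.Prime → p ∣ H.index → p ∉ π)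

open Subgroup

def IsPiNumber (π : Set ℕ) (n : ℕ) : Prop :=
  ∀ p : ℕ, p.Prime → p ∣ n → p ∈ π

section PiNumber

variable {π : Set ℕ} {m n : ℕ}

lemma isPiNumber_one : IsPiNumber π 1 :=
  fun _ hp h => absurd (Nat.dvd_one.mp h) hp.ne_one

lemma isPiNumber_prime_pow {p : ℕ} (hp : p.Prime) (hpπ : p ∈ π) (k : ℕ) :
    IsPiNumber π (p ^ k) :=
  fun _ hq h => (Nat.prime_dvd_prime_iff_eq hq hp).mp (hq.dvd_of_dvd_pow h) ▸ hpπ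

lemma IsPiNumber.of_dvd (hn : IsPiNumber π n) (h : m ∣ n) : IsPiNumber π m :=
  fun p hp hpm => hn p hp (hpm.trans h)

lemma IsPiNumber.mul (hm : IsPiNumber π m) (hn : IsPiNumber π n) : IsPiNumber π (m * n) :=
  fun p hp h => (hp.dvd_mul.mp h).elim (hm p hp) (hn p hp)

lemma IsPiNumber.coprime (hm : IsPiNumber π m) (hn : IsPiNumber πᶜ n) : m.Coprime n :=
  Nat.coprime_of_dvd fun p hp hpm hpn => hn p hp hpn (hm p hp hpm)

end PiNumber

section Hall

variable {G G' : Type*} [Group G] [Group G'] {π : Set ℕ}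

lemma IsHallSubgroup.map {f : G →* G'} (hf : Function.Surjective f) {Q : Subgroup G}
    (hQ : IsHallSubgroup π Q) : IsHallSubgroup π (Q.map f) :=
  ⟨IsPiNumber.of_dvd hQ.1 (card_map_dvd Q f), IsPiNumber.of_dvd hQ.2 (index_map_dvd Q hf)⟩

lemma IsHallSubgroup.eq_of_le {M P : Subgroup G} (hM : IsHallSubgroup π M)
    (hP : IsPiNumber π (Nat.card P)) (hMP : M ≤ P) : M = P :=
  le_antisymm hMP <| relIndex_eq_one.mp <|
    Nat.eq_one_of_dvd_coprimes (hP.coprime hM.2) (relIndex_dvd_card M P)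
      (relIndex_dvd_index_of_le hMP)

lemma IsHallSubgroup.map_subtype {K : Subgroup G} {R : Subgroup K} (hR : IsHallSubgroup π R)
    (hK : IsPiNumber πᶜ K.index) : IsHallSubgroup π (R.map K.subtype) := by
  refine ⟨?_, ?_⟩
  · rw [card_map_of_injective K.subtype_injective]
    exact hR.1
  · rw [index_map_subtype]
    exact IsPiNumber.mul hR.2 hK

lemma card_comap_mk' [Finite G] (N : Subgroup G) [N.Normal] (Q : Subgroup (G ⧸ N)) :
    Nat.card (Q.comap (QuotientGroup.mk' N)) = Nat.card N * Nat.card Q := by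
  have hidx := index_comap_of_surjective Q (QuotientGroup.mk'_surjective N)
  apply Nat.eq_of_mul_eq_mul_right (Nat.pos_of_ne_zero Q.index_ne_zero_of_finite)
  calc Nat.card (Q.comap (QuotientGroup.mk' N)) * Q.index = Nat.card G := by
        rw [← hidx, card_mul_index]
    _ = Nat.card N * Nat.card Q * Q.index := by
        rw [mul_assoc, card_mul_index, ← index_eq_card, card_mul_index]

lemma IsHallSubgroup.comap_mk' [Finite G] {N : Subgroup G} [N.Normal]
    (hN : IsPiNumber π (Nat.card N)) {Q : Subgroup (G ⧸ N)} (hQ : IsHallSubgroup π Q) :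
    IsHallSubgroup π (Q.comap (QuotientGroup.mk' N)) := by
  refine ⟨?_, ?_⟩
  · rw [card_comap_mk']
    exact hN.mul hQ.1
  · rw [index_comap_of_surjective Q (QuotientGroup.mk'_surjective N)]
    exact hQ.2

lemma Subgroup.IsComplement'.isHallSubgroup {N K : Subgroup G} (h : IsComplement' N K)
    (hN : IsPiNumber πᶜ (Nat.card N)) (hidx : IsPiNumber π N.index) : IsHallSubgroup π K :=
  ⟨h.symm.index_eq_card ▸ hidx, h.index_eq_card ▸ hN⟩

end Hall

lemma exists_normal_isMulCommutative_ne_bot (G : Type*) [Group G] [Group.IsSolvable G]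
    [Nontrivial G] : ∃ A : Subgroup G, A.Normal ∧ A ≠ ⊥ ∧ IsMulCommutative A := by
  obtain ⟨n, hn, hn1⟩ : ∃ n, derivedSeries G n ≠ ⊥ ∧ derivedSeries G (n + 1) = ⊥ := by
    obtain ⟨m, hm⟩ := Group.IsSolvable.solvable (G := G)
    induction m with
    | zero => exact absurd hm (by simp)
    | succ m ih =>
      by_cases h : derivedSeries G m = ⊥
      · exact ih h
      · exact ⟨m, h, hm⟩
  refine ⟨_, inferInstance, hn, ?_⟩
  rw [← le_centralizer_iff_isMulCommutative, ← commutator_eq_bot_iff_le_centralizer,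
    ← derivedSeries_succ]
  exact hn1

lemma exists_normal_isPGroup_ne_bot (G : Type*) [Group G] [Finite G] [Group.IsSolvable G]
    [Nontrivial G] :
    ∃ p, p.Prime ∧ ∃ N : Subgroup G, N.Normal ∧ N ≠ ⊥ ∧ IsPGroup p N := by
  obtain ⟨A, hA, hAbot, hAcomm⟩ := exists_normal_isMulCommutative_ne_bot G
  set p := (Nat.card A).minFac
  have hp : p.Prime := Nat.minFac_prime (A.one_lt_card_iff_ne_bot.mpr hAbot).ne'
  have := Fact.mk hp
  obtain ⟨P⟩ := Sylow.nonempty (p := p) (G := A)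
  have := P.characteristic_of_normal (normal_of_isMulCommutative P.1)
  refine ⟨p, hp, P.1.map A.subtype, inferInstance, ?_, P.isPGroup'.map _⟩
  rw [Ne, map_eq_bot_iff_of_injective _ A.subtype_injective]
  exact P.ne_bot_of_dvd_card (Nat.minFac_dvd _)

theorem exists_isHallSubgroup (π : Set ℕ) (G : Type*) [Group G] [Finite G]
    [Group.IsSolvable G] : ∃ Q : Subgroup G, IsHallSubgroup π Q := by
  induction h : Nat.card G using Nat.strong_induction_on generalizing G with
  | _ n ih =>
  rcases subsingleton_or_nontrivial G with _ | _
  · refine ⟨⊤, ?_, ?_⟩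
    · rw [card_top, Nat.card_of_subsingleton (1 : G)]
      exact isPiNumber_one
    · rw [index_top]
      exact isPiNumber_one
  obtain ⟨p, hp, N, hN, hNbot, hNp⟩ := exists_normal_isPGroup_ne_bot G
  have := Fact.mk hp
  obtain ⟨k, hk⟩ := IsPGroup.iff_card.mp hNp
  have hquot : Nat.card (G ⧸ N) < n := by
    rw [← h, ← index_eq_card, ← N.index_mul_card]
    exact lt_mul_of_one_lt_right (Nat.pos_of_ne_zero N.index_ne_zero_of_finite)
      (N.one_lt_card_iff_ne_bot.mpr hNbot)
  obtain ⟨Q, hQ⟩ := ih _ hquot (G ⧸ N) rfl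
  by_cases hpπ : p ∈ π
  · exact ⟨_, hQ.comap_mk' (hk ▸ isPiNumber_prime_pow hp hpπ k)⟩
  by_cases hQtop : Q = ⊤
  · have hNidx : IsPiNumber π N.index := by
      rw [index_eq_card, ← card_top, ← hQtop]
      exact hQ.1
    have hNcard : IsPiNumber πᶜ (Nat.card N) := hk ▸ isPiNumber_prime_pow hp hpπ k
    obtain ⟨K, hK⟩ := exists_right_complement'_of_coprime (hNidx.coprime hNcard).symm
    exact ⟨K, hK.isHallSubgroup hNcard hNidx⟩
  · have hmk := QuotientGroup.mk'_surjective N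
    set K := Q.comap (QuotientGroup.mk' N)
    have hKtop : K ≠ ⊤ := fun hK => hQtop (comap_injective hmk (hK.trans (comap_top _).symm))
    have hKcard : Nat.card K < n :=
      h ▸ lt_of_le_of_ne (card_le_card_group K) (mt (card_eq_iff_eq_top K).mp hKtop)
    obtain ⟨R, hR⟩ := ih _ hKcard K rfl
    exact ⟨_, hR.map_subtype (index_comap_of_surjective Q hmk ▸ hQ.2)⟩

theorem stmt_6_general (G H : Type*) [Group G] [Group H] [Finite G]
    [Group.IsSolvable G] (φ : G →* H) (hφ : Function.Surjective φ)
    (π : Set ℕ) (P : Subgroup H) (hP : IsHallSubgroup π P) :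
    ∃ Q : Subgroup G, IsHallSubgroup π Q ∧ Q.map φ = P := by
  set K := P.comap φ
  obtain ⟨R, hR⟩ := exists_isHallSubgroup π K
  have hQ : IsHallSubgroup π (R.map K.subtype) :=
    hR.map_subtype (index_comap_of_surjective P hφ ▸ hP.2)
  refine ⟨_, hQ, (hQ.map hφ).eq_of_le hP.1 ?_⟩
  rw [map_le_iff_le_comap]
  exact map_subtype_le R

theorem stmt_6 (G H : Type*) [Group G] [Group H] [Finite G] [Finite H]
    [Group.IsSolvable G] (φ : G →* H) (hφ : Function.Surjective φ)
    (π : Set ℕ) (P : Subgroup H) (hP : IsHallSubgroup π P) :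
    ∃ Q : Subgroup G, IsHallSubgroup π Q ∧ Q.map φ = P :=
  stmt_6_general G H φ hφ π P hP
end

section
/- Let G be a group, N ⊴ G a normal subgroup, and suppose that the extension data is given: then G embeds into the Cartesian wreath product N Wr (G/N). -/
/-!
Fix a transversal `s : G ⧸ N → G`. For `g ∈ G` and a coset `q`, the elements `s q * g` and
`s (q * g)` lie in the same coset, so `s q * g * (s (q * g))⁻¹ ∈ N`. Sending `g` to this
function of `q` together with the image of `g` in `G ⧸ N` is multiplicative by a telescoping
cocycle identity, and it is injective because on `N` it is coordinatewise conjugation by `s q`.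
-/

/-- The action of `B` on the base group `B → A` of the Cartesian (complete) wreath product,
by right translation of coordinates. -/
def wreathAut (A B : Type*) [Group A] [Group B] : B →* MulAut (B → A) where
  toFun b :=
    { toFun := fun f x => f (x * b)
      invFun := fun f x => f (x * b⁻¹)
      left_inv := fun f => by funext x; simp [mul_assoc]
      right_inv := fun f => by funext x; simp [mul_assoc]
      map_mul' := fun f g => rfl }
  map_one' := by ext f x; simp
  map_mul' := fun b₁ b₂ => by ext f x; simp [mul_assoc]

/-- The Cartesian (complete) wreath product `A Wr B`. -/
def WreathProduct (A B : Type*) [Group A] [Group B] : Type _ :=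
  (B → A) ⋊[wreathAut A B] B

instance (A B : Type*) [Group A] [Group B] : Group (WreathProduct A B) :=
  inferInstanceAs (Group ((B → A) ⋊[wreathAut A B] B))

namespace WreathProduct

variable {G : Type*} [Group G] {N : Subgroup G} [N.Normal]

lemma transversal_mul_mul_inv_mem {s : G ⧸ N → G} (hs : Function.RightInverse s QuotientGroup.mk)
    (g : G) (q : G ⧸ N) : s q * g * (s (q * g))⁻¹ ∈ N := by
  rw [← QuotientGroup.eq_one_iff, QuotientGroup.mk_mul, QuotientGroup.mk_mul,
    QuotientGroup.mk_inv, hs, hs, mul_inv_cancel]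

variable (s : G ⧸ N → G) (hs : Function.RightInverse s QuotientGroup.mk)

def transversalCocycle (g : G) (q : G ⧸ N) : N :=
  ⟨s q * g * (s (q * g))⁻¹, transversal_mul_mul_inv_mem hs g q⟩

lemma transversalCocycle_mul (g₁ g₂ : G) (q : G ⧸ N) :
    transversalCocycle s hs (g₁ * g₂) q =
      transversalCocycle s hs g₁ q * transversalCocycle s hs g₂ (q * g₁) := by
  ext
  simp only [transversalCocycle, Subgroup.coe_mul, QuotientGroup.mk_mul, mul_assoc]
  group

lemma transversalCocycle_one (q : G ⧸ N) : transversalCocycle s hs 1 q = 1 := by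
  ext
  simp [transversalCocycle]

def embedding : G →* WreathProduct N (G ⧸ N) where
  toFun g := ⟨transversalCocycle s hs g, g⟩
  map_one' := SemidirectProduct.ext (funext (transversalCocycle_one s hs)) rfl
  map_mul' g₁ g₂ := SemidirectProduct.ext (funext (transversalCocycle_mul s hs g₁ g₂)) rfl

lemma embedding_injective : Function.Injective (embedding s hs) := by
  rw [injective_iff_map_eq_one]
  intro g hg
  have hgN : (g : G ⧸ N) = 1 := congrArg SemidirectProduct.right hg
  have hcoord : transversalCocycle s hs g 1 = 1 :=
    congrFun (congrArg SemidirectProduct.left hg) 1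
  have hconj : s 1 * g * (s 1)⁻¹ = 1 := by
    simpa only [transversalCocycle, hgN, mul_one, OneMemClass.coe_one] using
      congrArg Subtype.val hcoord
  simpa using hconj

end WreathProduct

/-- Kaloujnine–Krasner: `G` embeds into the Cartesian wreath product `N Wr (G/N)`. -/
theorem stmt_11 (G : Type*) [Group G] (N : Subgroup G) [N.Normal] :
    ∃ f : G →* WreathProduct N (G ⧸ N), Function.Injective f :=
  ⟨WreathProduct.embedding Quotient.out QuotientGroup.out_eq',
    WreathProduct.embedding_injective _ _⟩
end

section
/- Let B be an abelian group in which every element has finite order but the orders of elements are unbounded. Then B discriminates the variety of all abelian groups: for any finite collection of nonzero linear forms L₁, ..., L_d in s variables over ℤ, there exist elements b₁, ..., b_s ∈ B such that L_i(b₁, ..., b_s) ≠ 0 in B for all i. -/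
lemma aux_bound (C M : ℤ) (hC : 0 < C) (hM : M = 2*C+1) (n : ℕ) (c : ℕ → ℤ)
    (hc : ∀ j, |c j| ≤ C) :
    2 * |∑ j ∈ Finset.range n, c j * M ^ j| ≤ M ^ n - 1 := by
  induction n with
  | zero => simp
  | succ n ih =>
    rw [Finset.sum_range_succ]
    have h1 : |∑ j ∈ Finset.range n, c j * M ^ j + c n * M ^ n| ≤
        |∑ j ∈ Finset.range n, c j * M ^ j| + |c n * M ^ n| := abs_add_le _ _
    have h2 : |c n * M ^ n| ≤ C * M ^ n := by
      rw [abs_mul]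
      have hp : (0:ℤ) < M ^ n := pow_pos (by omega) n
      have := hc n
      calc |c n| * |M ^ n| = |c n| * M ^ n := by rw [abs_of_pos hp]
        _ ≤ C * M ^ n := by
          exact mul_le_mul_of_nonneg_right this (le_of_lt hp)
    have h3 : M ^ (n+1) = (2*C+1) * M ^ n := by rw [pow_succ, hM]; ring
    nlinarith [ih]

theorem stmt_14 (B : Type*) [AddCommGroup B]
    (htor : ∀ b : B, ∃ n : ℕ, 0 < n ∧ n • b = 0)
    (hunbdd : ∀ N : ℕ, ∃ b : B, N < addOrderOf b)
    (d s : ℕ) (L : Fin d → Fin s → ℤ) (hL : ∀ i, L i ≠ 0) :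
    ∃ z : Fin s → B, ∀ i, ∑ j, L i j • z j ≠ 0 := by
  classical
  set C : ℤ := 1 + ∑ i, ∑ j, |L i j| with hCdef
  have hC : 0 < C := by
    have : (0:ℤ) ≤ ∑ i, ∑ j, |L i j| :=
      Finset.sum_nonneg fun i _ => Finset.sum_nonneg fun j _ => abs_nonneg _
    omega
  have hCb : ∀ i j, |L i j| ≤ C := by
    intro i j
    have h1 : |L i j| ≤ ∑ j', |L i j'| :=
      Finset.single_le_sum (f := fun j' => |L i j'|) (fun j' _ => abs_nonneg _) (Finset.mem_univ j)
    have h2 : (∑ j', |L i j'|) ≤ ∑ i', ∑ j', |L i' j'| :=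
      Finset.single_le_sum (f := fun i' => ∑ j', |L i' j'|)
        (fun i' _ => Finset.sum_nonneg fun j' _ => abs_nonneg _) (Finset.mem_univ i)
    omega
  set M : ℤ := 2*C+1 with hMdef
  have hM1 : 1 < M := by omega
  obtain ⟨N, hN⟩ : ∃ N : ℕ, M ^ s ≤ (N : ℤ) := ⟨(M^s).toNat, by simp [Int.self_le_toNat]⟩
  obtain ⟨z0, hz0⟩ := hunbdd N
  -- define c i : ℕ → ℤ extending L i
  set c : Fin d → ℕ → ℤ := fun i j => if h : j < s then L i ⟨j, h⟩ else 0 with hcdef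
  have hcb : ∀ i j, |c i j| ≤ C := by
    intro i j
    by_cases h : j < s
    · simp [hcdef, h, hCb]
    · simp [hcdef, h]; omega
  refine ⟨fun j => (M ^ (j:ℕ)) • z0, fun i => ?_⟩
  have hsum : ∑ j, L i j • (M ^ (j:ℕ)) • z0 = (∑ j ∈ Finset.range s, c i j * M ^ j) • z0 := by
    rw [← Fin.sum_univ_eq_sum_range (fun j => c i j * M ^ j) s, Finset.sum_smul]
    refine Finset.sum_congr rfl fun j _ => ?_
    rw [smul_smul]
    congr 1
    simp [hcdef, j.isLt]
  rw [hsum]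
  set m : ℤ := ∑ j ∈ Finset.range s, c i j * M ^ j with hmdef
  -- m ≠ 0
  have hmne : m ≠ 0 := by
    obtain ⟨j0, hj0⟩ : ∃ j0 : Fin s, L i j0 ≠ 0 := by
      by_contra h
      push_neg at h
      exact hL i (funext h)
    have hS : ((Finset.range s).filter (fun j => c i j ≠ 0)).Nonempty :=
      ⟨j0, by simp [hcdef, j0.isLt, hj0]⟩
    set k := ((Finset.range s).filter (fun j => c i j ≠ 0)).max' hS with hkdef
    have hkmem : k ∈ (Finset.range s).filter (fun j => c i j ≠ 0) := Finset.max'_mem _ hS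
    simp only [Finset.mem_filter, Finset.mem_range] at hkmem
    have hzero : ∀ j, k < j → c i j = 0 := by
      intro j hj
      by_contra hne
      by_cases hjs : j < s
      · have : j ≤ k := Finset.le_max' _ j (by simp [hjs, hne])
        omega
      · exact hne (by simp [hcdef, hjs])
    have hsplit : m = (∑ j ∈ Finset.range k, c i j * M ^ j) + c i k * M ^ k := by
      rw [hmdef, ← Finset.sum_range_succ]
      rcases Nat.lt_or_ge (k+1) s with h | h
      · rw [← Finset.sum_range_add_sum_Ico _ (le_of_lt h)]
        have : ∑ j ∈ Finset.Ico (k+1) s, c i j * M ^ j = 0 :=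
          Finset.sum_eq_zero fun j hj => by
            rw [hzero j (by simp at hj; omega)]; ring
        omega
      · have : s = k + 1 := by omega
        rw [this]
    have hbd := aux_bound C M hC hMdef k (c i) (hcb i)
    have hpk : (0:ℤ) < M ^ k := pow_pos (by omega) k
    have hck : 1 ≤ |c i k| := by
      have := abs_pos.mpr hkmem.2
      omega
    have hlead : M ^ k ≤ |c i k * M ^ k| := by
      rw [abs_mul, abs_of_pos hpk]
      nlinarith
    intro hm0
    rw [hsplit] at hm0
    have : |∑ j ∈ Finset.range k, c i j * M ^ j| = |c i k * M ^ k| := by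
      rw [show (∑ j ∈ Finset.range k, c i j * M ^ j) = -(c i k * M ^ k) by linarith]
      exact abs_neg _
    linarith [this, hbd, hlead, hpk]
  -- |m| < addOrderOf z0
  have hbd := aux_bound C M hC hMdef s (c i) (hcb i)
  have hlt : m.natAbs < addOrderOf z0 := by
    have h1 : |m| < M ^ s := by linarith [abs_nonneg m]
    have h2 : (m.natAbs : ℤ) = |m| := Int.abs_eq_natAbs m |>.symm
    have : (m.natAbs : ℤ) < (addOrderOf z0 : ℤ) := by
      calc (m.natAbs:ℤ) = |m| := h2
        _ < M ^ s := h1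
        _ ≤ N := hN
        _ < addOrderOf z0 := by exact_mod_cast hz0
    exact_mod_cast this
  intro h0
  have hnat : m.natAbs • z0 = 0 := by
    rcases Int.natAbs_eq m with h | h
    · rw [← natCast_zsmul, ← h, h0]
    · rw [← natCast_zsmul, ← neg_neg ((m.natAbs : ℤ)), ← h, neg_zsmul, h0, neg_zero]
  have hdvd : addOrderOf z0 ∣ m.natAbs := addOrderOf_dvd_of_nsmul_eq_zero hnat
  have hpos : 0 < m.natAbs := Int.natAbs_pos.mpr hmne
  exact absurd (Nat.le_of_dvd hpos hdvd) (by omega)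
end
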